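/- If μ is a finite Borel measure on T that is singular with respect to Lebesgue measure, then the Poisson integral of μ tends to 0 almost everywhere as r increases to 1: for almost every x ∈ (−π, π], (P_r * μ)(x) = ∫_{-π}^{π} P_r(x − t) dμ(t) → 0 as r ↑ 1. -/

import Mathlib

/-!
For `1/2 ≤ r < 1` and `|s| ≤ π`, the bound `1 - cos s ≥ 2 s² / π²` gives
`P_r(s) ≤ π² η / (η² + s²)` with `η = 1 - r`. As `x - t` lies within `π` of one of `0, ±2π`,
`(P_r * μ)(x)` is at most `π²` times the half-plane Poisson integral at `x` of
`ν = μ + μ(· - 2π) + μ(· + 2π)`, a finite measure that is again singular. Cutting the half-plane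
kernel into dyadic shells around `x` bounds that integral by `8 ε + 4 ν(ℝ) η / δ²` as soon as
`ν(B(x, h)) ≤ ε h` for `h ≤ δ`. For Lebesgue-almost every `x` this holds for every `ε > 0` with
some `δ > 0`, because the Besicovitch differentiation theorem identifies the limit of
`ν(B(x, h)) / 2h` with the density of `ν`, which vanishes a.e. by singularity.
-/

open MeasureTheory Filter Real Set

/-- The Poisson kernel `P_r(t) = (1 - r²)/(1 - 2r cos t + r²)` (a `2π`-periodic function
of `t`, for `0 < r < 1`). -/
noncomputable def poissonKernelReal (r t : ℝ) : ℝ :=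
  (1 - r ^ 2) / (1 - 2 * r * Real.cos t + r ^ 2)

open Metric Topology

/-- The Poisson kernel of the upper half-plane, without its factor `1 / π`. -/
noncomputable def halfPlaneKernel (η s : ℝ) : ℝ := η / (η ^ 2 + s ^ 2)

theorem halfPlaneKernel_nonneg {η : ℝ} (hη : 0 ≤ η) (s : ℝ) : 0 ≤ halfPlaneKernel η s := by
  unfold halfPlaneKernel; positivity

theorem continuous_halfPlaneKernel {η : ℝ} (hη : 0 < η) : Continuous (halfPlaneKernel η) :=
  continuous_const.div (by fun_prop) fun s => by positivity

theorem halfPlaneKernel_le_of_two_pow_le {η s : ℝ} (hη : 0 < η) {k : ℕ}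
    (hk : 2 ^ k * η ≤ 2 * max η |s|) : halfPlaneKernel η s ≤ 4 / ((2 ^ k) ^ 2 * η) := by
  have hmax : max η |s| ^ 2 ≤ η ^ 2 + s ^ 2 := by
    rcases max_choice η |s| with h | h <;> rw [h] <;> nlinarith [sq_abs s, sq_nonneg η, sq_nonneg s]
  have hk2 : (2 ^ k * η) ^ 2 ≤ 4 * (η ^ 2 + s ^ 2) := by
    nlinarith [pow_le_pow_left₀ (by positivity) hk 2]
  rw [halfPlaneKernel, div_le_div_iff₀ (by positivity) (by positivity)]
  nlinarith

theorem integrable_halfPlaneKernel (ν : Measure ℝ) [IsFiniteMeasure ν] {η : ℝ} (hη : 0 < η)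
    (x : ℝ) : Integrable (fun t => halfPlaneKernel η (x - t)) ν := by
  refine .of_bound
    ((continuous_halfPlaneKernel hη).comp (continuous_sub_left x)).aestronglyMeasurable
    (4 / η) (ae_of_all _ fun t => ?_)
  rw [Real.norm_of_nonneg (halfPlaneKernel_nonneg hη.le _)]
  simpa using halfPlaneKernel_le_of_two_pow_le hη (k := 0)
    (by rw [pow_zero, one_mul]; linarith [le_max_left η |x - t|])

theorem halfPlaneKernel_le_sum_indicator {η : ℝ} (hη : 0 < η) (N : ℕ) (x t : ℝ) :
    halfPlaneKernel η (x - t) ≤ ∑ k ∈ Finset.range N,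
      (closedBall x (2 ^ k * η)).indicator (fun _ => 4 / ((2 ^ k) ^ 2 * η)) t
        + 4 / ((2 ^ N) ^ 2 * η) := by
  classical
  have hex : ∃ k : ℕ, |x - t| ≤ 2 ^ k * η := by
    obtain ⟨n, hn⟩ := pow_unbounded_of_one_lt (|x - t| / η) one_lt_two
    exact ⟨n, ((div_lt_iff₀ hη).1 hn).le⟩
  set k := Nat.find hex
  have hmem : t ∈ closedBall x (2 ^ k * η) := by
    rw [mem_closedBall, dist_comm, Real.dist_eq]; exact Nat.find_spec hex
  -- By minimality of `k`, `|x - t|` exceeds half the radius `2 ^ k * η` unless `k = 0`.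
  have hk : halfPlaneKernel η (x - t) ≤ 4 / ((2 ^ k) ^ 2 * η) := by
    refine halfPlaneKernel_le_of_two_pow_le hη ?_
    rcases Nat.eq_zero_or_pos k with h0 | hpos
    · rw [h0]; linarith [le_max_left η |x - t|]
    · have := Nat.find_min hex (Nat.sub_one_lt hpos.ne')
      rw [← Nat.sub_one_add_one hpos.ne', pow_succ]
      linarith [le_max_right η |x - t|]
  have hterm : ∀ j ∈ Finset.range N,
      0 ≤ (closedBall x (2 ^ j * η)).indicator (fun _ => 4 / ((2 ^ j) ^ 2 * η)) t :=
    fun j _ => indicator_nonneg (fun _ _ => by positivity) t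
  rcases lt_or_ge k N with hkN | hkN
  · have := Finset.single_le_sum hterm (Finset.mem_range.2 hkN)
    rw [indicator_of_mem hmem] at this
    have : (0 : ℝ) ≤ 4 / ((2 ^ N) ^ 2 * η) := by positivity
    linarith
  · have : 4 / ((2 ^ k) ^ 2 * η) ≤ 4 / ((2 ^ N) ^ 2 * η) := by
      gcongr; norm_num
    linarith [Finset.sum_nonneg hterm]

theorem integral_halfPlaneKernel_le {ν : Measure ℝ} [IsFiniteMeasure ν] {x ε δ η : ℝ}
    (hη : 0 < η) (hηδ : η ≤ δ) (hball : ∀ h ∈ Ioc 0 δ, ν.real (closedBall x h) ≤ ε * h) :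
    ∫ t, halfPlaneKernel η (x - t) ∂ν ≤ 8 * ε + 4 * ν.real univ * η / δ ^ 2 := by
  obtain ⟨n, hn, hn'⟩ := exists_nat_pow_near ((one_le_div hη).2 hηδ) one_lt_two
  rw [le_div_iff₀ hη] at hn
  rw [div_lt_iff₀ hη] at hn'
  have hδ : 0 < δ := hη.trans_le hηδ
  have hε : 0 ≤ ε := nonneg_of_mul_nonneg_left
    ((measureReal_nonneg).trans (hball δ ⟨hδ, le_rfl⟩)) hδ
  have hint : ∀ k, Integrable ((closedBall x (2 ^ k * η)).indicator
      (fun _ => 4 / ((2 ^ k) ^ 2 * η))) ν :=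
    fun k => (integrable_const _).indicator measurableSet_closedBall
  have hball_term : ∀ k ∈ Finset.range (n + 1),
      ν.real (closedBall x (2 ^ k * η)) * (4 / ((2 ^ k) ^ 2 * η)) ≤ 4 * ε * (1 / 2) ^ k := by
    intro k hk
    have hkn : (2 : ℝ) ^ k ≤ 2 ^ n :=
      pow_le_pow_right₀ one_le_two (Nat.lt_succ_iff.1 (Finset.mem_range.1 hk))
    calc ν.real (closedBall x (2 ^ k * η)) * (4 / ((2 ^ k) ^ 2 * η))
        ≤ ε * (2 ^ k * η) * (4 / ((2 ^ k) ^ 2 * η)) := by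
          gcongr
          exact hball _ ⟨by positivity, by nlinarith⟩
      _ = 4 * ε * (1 / 2) ^ k := by rw [one_div_pow]; field_simp
  have htail :
      ν.real univ * (4 / ((2 ^ (n + 1)) ^ 2 * η)) ≤ 4 * ν.real univ * η / δ ^ 2 := by
    calc ν.real univ * (4 / ((2 ^ (n + 1)) ^ 2 * η))
        = 4 * ν.real univ * η / (2 ^ (n + 1) * η) ^ 2 := by field_simp
      _ ≤ 4 * ν.real univ * η / δ ^ 2 := by gcongr
  calc ∫ t, halfPlaneKernel η (x - t) ∂ν
      ≤ ∫ t, (∑ k ∈ Finset.range (n + 1), (closedBall x (2 ^ k * η)).indicator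
          (fun _ => 4 / ((2 ^ k) ^ 2 * η)) t + 4 / ((2 ^ (n + 1)) ^ 2 * η)) ∂ν :=
        integral_mono (integrable_halfPlaneKernel ν hη x)
          ((integrable_finsetSum _ fun k _ => hint k).add (integrable_const _))
          fun t => halfPlaneKernel_le_sum_indicator hη (n + 1) x t
    _ = ∑ k ∈ Finset.range (n + 1),
            ν.real (closedBall x (2 ^ k * η)) * (4 / ((2 ^ k) ^ 2 * η))
          + ν.real univ * (4 / ((2 ^ (n + 1)) ^ 2 * η)) := by
        rw [integral_add (integrable_finsetSum _ fun k _ => hint k) (integrable_const _),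
          integral_finsetSum _ fun k _ => hint k, integral_const, smul_eq_mul]
        simp only [integral_indicator_const _ measurableSet_closedBall, smul_eq_mul]
    _ ≤ ∑ k ∈ Finset.range (n + 1), 4 * ε * (1 / 2) ^ k + 4 * ν.real univ * η / δ ^ 2 :=
        add_le_add (Finset.sum_le_sum hball_term) htail
    _ ≤ 8 * ε + 4 * ν.real univ * η / δ ^ 2 := by
        rw [← Finset.mul_sum]
        nlinarith [sum_geometric_two_le (n + 1)]

theorem exists_measureReal_closedBall_le {ν : Measure ℝ} {x : ℝ}
    (hx : Tendsto (fun h => ν (closedBall x h) / volume (closedBall x h)) (𝓝[>] 0) (𝓝 0))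
    {ε : ℝ} (hε : 0 < ε) : ∃ δ > 0, ∀ h ∈ Ioc 0 δ, ν.real (closedBall x h) ≤ ε * h := by
  obtain ⟨δ, hδ, hsub⟩ := mem_nhdsGT_iff_exists_Ioc_subset.1 <|
    ENNReal.tendsto_nhds_zero.1 hx (ENNReal.ofReal (ε / 2)) (by simpa using hε)
  refine ⟨δ, hδ, fun h hh => ENNReal.toReal_le_of_le_ofReal (by nlinarith [hh.1]) ?_⟩
  have := hsub hh
  rw [mem_ofPred_eq, Real.volume_closedBall,
    ENNReal.div_le_iff (by simpa using hh.1) ENNReal.ofReal_ne_top,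
    ← ENNReal.ofReal_mul (by positivity)] at this
  convert this using 2
  ring

theorem tendsto_integral_halfPlaneKernel {ν : Measure ℝ} [IsFiniteMeasure ν] {x : ℝ}
    (hx : Tendsto (fun h => ν (closedBall x h) / volume (closedBall x h)) (𝓝[>] 0) (𝓝 0)) :
    Tendsto (fun η => ∫ t, halfPlaneKernel η (x - t) ∂ν) (𝓝[>] 0) (𝓝 0) := by
  refine tendsto_order.2 ⟨fun a ha => ?_, fun a ha => ?_⟩
  · filter_upwards [self_mem_nhdsWithin] with η hη
    exact ha.trans_le (integral_nonneg fun t => halfPlaneKernel_nonneg (le_of_lt hη) _)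
  obtain ⟨δ, hδ, hball⟩ := exists_measureReal_closedBall_le hx (ε := a / 16) (by positivity)
  have htail : Tendsto (fun η => 4 * ν.real univ * η / δ ^ 2) (𝓝[>] 0) (𝓝 0) := by
    have := ((by fun_prop : Continuous fun η : ℝ => 4 * ν.real univ * η / δ ^ 2)
      |>.tendsto 0).mono_left (nhdsWithin_le_nhds (s := Ioi 0))
    rwa [mul_zero, zero_div] at this
  filter_upwards [htail.eventually (gt_mem_nhds (half_pos ha)), Ioc_mem_nhdsGT hδ]
    with η hη hηδ
  linarith [integral_halfPlaneKernel_le hηδ.1 hηδ.2 hball]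

theorem poissonKernelReal_nonneg {r : ℝ} (hr : |r| ≤ 1) (t : ℝ) :
    0 ≤ poissonKernelReal r t := by
  have hden : 1 - 2 * r * cos t + r ^ 2 = (r - cos t) ^ 2 + sin t ^ 2 := by
    linear_combination -sin_sq_add_cos_sq t
  rw [poissonKernelReal, hden]
  have := sq_le_one_iff_abs_le_one r |>.2 hr
  exact div_nonneg (by linarith) (by positivity)

theorem poissonKernelReal_add_two_pi (r t : ℝ) :
    poissonKernelReal r (t + 2 * π) = poissonKernelReal r t := by
  simp only [poissonKernelReal, cos_add_two_pi]

theorem poissonKernelReal_sub_two_pi (r t : ℝ) :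
    poissonKernelReal r (t - 2 * π) = poissonKernelReal r t := by
  simp only [poissonKernelReal, cos_sub_two_pi]

theorem poissonKernelReal_le_halfPlaneKernel {r s : ℝ} (hr : 1 / 2 ≤ r) (hr1 : r < 1)
    (hs : |s| ≤ π) : poissonKernelReal r s ≤ π ^ 2 * halfPlaneKernel (1 - r) s := by
  have hcos := cos_le_one_sub_mul_cos_sq hs
  have hπ : 2 < π ^ 2 := by nlinarith [pi_gt_three]
  have hden : 2 / π ^ 2 * ((1 - r) ^ 2 + s ^ 2) ≤ 1 - 2 * r * cos s + r ^ 2 := by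
    have : 2 / π ^ 2 * (1 - r) ^ 2 ≤ (1 - r) ^ 2 := by
      rw [div_mul_eq_mul_div, div_le_iff₀ (by positivity)]; nlinarith [sq_nonneg (1 - r)]
    nlinarith [cos_le_one s]
  rw [poissonKernelReal, halfPlaneKernel, ← mul_div_assoc]
  calc (1 - r ^ 2) / (1 - 2 * r * cos s + r ^ 2)
      ≤ (2 * (1 - r)) / (2 / π ^ 2 * ((1 - r) ^ 2 + s ^ 2)) := by
        gcongr
        nlinarith
    _ = π ^ 2 * (1 - r) / ((1 - r) ^ 2 + s ^ 2) := by
        field_simp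

theorem poissonKernelReal_le_sum_halfPlaneKernel {r s : ℝ} (hr : 1 / 2 ≤ r) (hr1 : r < 1)
    (hs : |s| ≤ 2 * π) :
    poissonKernelReal r s ≤ π ^ 2 * (halfPlaneKernel (1 - r) s
      + halfPlaneKernel (1 - r) (s - 2 * π) + halfPlaneKernel (1 - r) (s + 2 * π)) := by
  have hQ : ∀ u, 0 ≤ π ^ 2 * halfPlaneKernel (1 - r) u :=
    fun u => mul_nonneg (sq_nonneg π) (halfPlaneKernel_nonneg (by linarith) u)
  rw [abs_le] at hs
  rcases le_or_gt s (-π) with hneg | hneg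
  · rw [← poissonKernelReal_add_two_pi]
    have := poissonKernelReal_le_halfPlaneKernel hr hr1 (s := s + 2 * π)
      (abs_le.2 ⟨by linarith, by linarith⟩)
    nlinarith [hQ s, hQ (s - 2 * π)]
  rcases le_or_gt s π with hpos | hpos
  · have := poissonKernelReal_le_halfPlaneKernel hr hr1 (abs_le.2 ⟨hneg.le, hpos⟩)
    nlinarith [hQ (s + 2 * π), hQ (s - 2 * π)]
  · rw [← poissonKernelReal_sub_two_pi]
    have := poissonKernelReal_le_halfPlaneKernel hr hr1 (s := s - 2 * π)
      (abs_le.2 ⟨by linarith, by linarith⟩)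
    nlinarith [hQ s, hQ (s + 2 * π)]

theorem integral_poissonKernelReal_le {μ : Measure ℝ} [IsFiniteMeasure μ]
    (hcarrier : μ (Ioc (-π) π)ᶜ = 0) {x r : ℝ} (hx : x ∈ Ioc (-π) π) (hr : 1 / 2 ≤ r)
    (hr1 : r < 1) :
    ∫ t, poissonKernelReal r (x - t) ∂μ ≤ π ^ 2 *
      ∫ t, halfPlaneKernel (1 - r) (x - t) ∂(μ + μ.map (· + 2 * π) + μ.map (· - 2 * π)) := by
  have hη : 0 < 1 - r := by linarith
  have hQ : ∀ (ν : Measure ℝ) [IsFiniteMeasure ν],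
      Integrable (fun t => halfPlaneKernel (1 - r) (x - t)) ν :=
    fun ν _ => integrable_halfPlaneKernel ν hη x
  have hadd : ∀ c, Integrable (fun t => halfPlaneKernel (1 - r) (x - (t + c))) μ := fun c => by
    convert integrable_halfPlaneKernel μ hη (x - c) using 3; ring
  have hsub : ∀ c, Integrable (fun t => halfPlaneKernel (1 - r) (x - (t - c))) μ := fun c => by
    simpa only [sub_eq_add_neg] using hadd (-c)
  calc ∫ t, poissonKernelReal r (x - t) ∂μ
      ≤ ∫ t, π ^ 2 * (halfPlaneKernel (1 - r) (x - t)
          + halfPlaneKernel (1 - r) (x - (t + 2 * π))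
          + halfPlaneKernel (1 - r) (x - (t - 2 * π))) ∂μ := by
        refine integral_mono_of_nonneg (ae_of_all _ fun t => poissonKernelReal_nonneg
          (abs_le.2 ⟨by linarith, hr1.le⟩) _)
          ((((hQ μ).add (hadd _)).add (hsub _)).const_mul _) ?_
        filter_upwards [ae_iff.2 hcarrier] with t ht
        have := poissonKernelReal_le_sum_halfPlaneKernel hr hr1 (s := x - t)
          (abs_le.2 ⟨by linarith [hx.1, hx.2, ht.1, ht.2], by linarith [hx.1, hx.2, ht.1, ht.2]⟩)
        rwa [sub_sub, sub_add] at this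
    _ = _ := by
        rw [integral_const_mul, integral_add_measure (hQ _) (hQ _),
          integral_add_measure (hQ _) (hQ _), (measurableEmbedding_addRight _).integral_map,
          (measurableEmbedding_subRight _).integral_map, integral_add _ (hsub _),
          integral_add (hQ μ) (hadd _)]
        exact (hQ μ).add (hadd _)

/-- If `μ` is a finite Borel measure on `T` (realized as a finite Borel measure on `ℝ`
carried by `(-π, π]`) that is singular with respect to Lebesgue measure, then its Poisson
integral tends to `0` almost everywhere as `r ↑ 1`: for a.e. `x ∈ (-π, π]`,
`(P_r * μ)(x) = ∫ P_r(x - t) dμ(t) → 0`. -/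
theorem poisson_integral_singular_tendsto_zero (μ : Measure ℝ) [IsFiniteMeasure μ]
    (hcarrier : μ (Ioc (-π) π)ᶜ = 0)
    (hsing : μ.MutuallySingular volume) :
    ∀ᵐ x ∂(volume.restrict (Ioc (-π) π)),
      Tendsto (fun r : ℝ => ∫ t, poissonKernelReal r (x - t) ∂μ)
        (nhdsWithin 1 (Ioo 0 1)) (nhds 0) := by
  set ν := μ + μ.map (· + 2 * π) + μ.map (· - 2 * π)
  have hν : ν ⟂ₘ volume := by
    refine (hsing.add_left ?_).add_left ?_
    · simpa only [map_add_right_eq_self] using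
        (measurableEmbedding_addRight (2 * π)).mutuallySingular_map hsing
    · simpa only [map_sub_right_eq_self] using
        (measurableEmbedding_subRight (2 * π)).mutuallySingular_map hsing
  have h1r : Tendsto (fun r : ℝ => 1 - r) (𝓝[Ioo 0 1] 1) (𝓝[>] 0) :=
    tendsto_nhdsWithin_of_tendsto_nhds_of_eventually_within _
      (((continuous_const.sub continuous_id).tendsto' 1 0 (sub_self 1)).mono_left
        nhdsWithin_le_nhds)
      (by filter_upwards [self_mem_nhdsWithin] with r hr using sub_pos.2 hr.2)
  have hr : ∀ᶠ r : ℝ in 𝓝[Ioo 0 1] 1, r ∈ Ioo (1 / 2) 1 := by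
    filter_upwards [nhdsWithin_le_nhds (Ioi_mem_nhds (by norm_num : (1 / 2 : ℝ) < 1)),
      self_mem_nhdsWithin] with r h₁ h₂ using ⟨h₁, h₂.2⟩
  rw [ae_restrict_iff' measurableSet_Ioc]
  filter_upwards [Besicovitch.ae_tendsto_rnDeriv ν volume, hν.rnDeriv_ae_eq_zero]
    with x hdens hzero hx
  rw [hzero, Pi.zero_apply] at hdens
  refine tendsto_of_tendsto_of_tendsto_of_le_of_le' tendsto_const_nhds
    (by simpa only [mul_zero, Function.comp_def] using
      ((tendsto_integral_halfPlaneKernel hdens).comp h1r).const_mul (π ^ 2))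
    (hr.mono fun r hr => integral_nonneg fun t => poissonKernelReal_nonneg
      (abs_le.2 ⟨by linarith [hr.1], hr.2.le⟩) _)
    (hr.mono fun r hr => integral_poissonKernelReal_le hcarrier hx hr.1.le hr.2)
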